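/- Let Bⁿ ⊂ ℝⁿ be the open unit ball and define the Berwald metric F(x,y) = (√(‖y‖² − (‖x‖²‖y‖² − ⟨x,y⟩²)) + ⟨x,y⟩)² / ((1 − ‖x‖²)² · √(‖y‖² − (‖x‖²‖y‖² − ⟨x,y⟩²))) for x ∈ Bⁿ, y ∈ ℝⁿ∖{0}. Then F satisfies Rapcsák's equations ∑_k (∂²F/∂x^k∂y^l) y^k = ∂F/∂x^l for every l (F is projective), and its projective factor P = (∑_m (∂F/∂x^m) y^m)/(2F) satisfies ∂P/∂x^k = P·∂P/∂y^k for every k; i.e., F has constant flag curvature K = 0. -/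

import Mathlib

open scoped RealInnerProductSpace BigOperators

noncomputable section

abbrev E (n : ℕ) := EuclideanSpace ℝ (Fin n)

/-- Partial derivative of `F(x,y)` in the direction `∂/∂xⁱ`. -/
def pdx {n : ℕ} (F : E n → E n → ℝ) (i : Fin n) (x y : E n) : ℝ :=
  deriv (fun t : ℝ => F (x + t • EuclideanSpace.single i (1 : ℝ)) y) 0

/-- Partial derivative of `F(x,y)` in the direction `∂/∂yⁱ`. -/
def pdy {n : ℕ} (F : E n → E n → ℝ) (i : Fin n) (x y : E n) : ℝ :=
  deriv (fun t : ℝ => F x (y + t • EuclideanSpace.single i (1 : ℝ))) 0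

/-- The projective factor `P = (∑_m F_{x^m} y^m)/(2F)`. -/
def projFactor {n : ℕ} (F : E n → E n → ℝ) (x y : E n) : ℝ :=
  (∑ m, pdx F m x y * y m) / (2 * F x y)
/-- The Berwald metric on the unit ball. -/
def Berwald {n : ℕ} (x y : E n) : ℝ :=
  (Real.sqrt (‖y‖ ^ 2 - (‖x‖ ^ 2 * ‖y‖ ^ 2 - ⟪x, y⟫ ^ 2)) + ⟪x, y⟫) ^ 2 /
    ((1 - ‖x‖ ^ 2) ^ 2 * Real.sqrt (‖y‖ ^ 2 - (‖x‖ ^ 2 * ‖y‖ ^ 2 - ⟪x, y⟫ ^ 2)))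

/-!
Write `u = ‖x‖²`, `v = ‖y‖²`, `w = ⟪x, y⟫` and `A = √((1 - u) v + w²)`, so that
`F = f(u, v, w) = (A + w)² / ((1 - u)² A)`; the projective factor turns out to be
`P = p(u, v, w) = (A + w) / (1 - u)`. For any `g(u, v, w)` the chain rule gives
`∂g/∂xⁱ = 2 g_u xⁱ + g_w yⁱ` and `∂g/∂yⁱ = 2 g_v yⁱ + g_w xⁱ`. Contracting with `y`, Rapcsák's
equations reduce to `2w f_vu + v f_vw = 0` and `2w f_wu + v f_ww = 2 f_u`, and `∂P/∂xᵏ = P ∂P/∂yᵏ`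
to `2 p_u = p p_w` and `p_w = 2 p p_v`. After eliminating `v` through `(1 - u) v = A² - w²`,
these are identities between rational functions of `u, w, A`.
-/

section partialDerivatives

variable {n : ℕ} {x y : E n}

lemma sum_mul_eq_inner (x y : E n) : ∑ k, x k * y k = ⟪x, y⟫ := by
  simp [PiLp.inner_apply, mul_comm]

lemma sum_single_mul (y : E n) (l : Fin n) :
    ∑ k, EuclideanSpace.single k (1 : ℝ) l * y k = y l := by
  simp [PiLp.single_apply]

lemma hasDerivAt_line {V : Type*} [NormedAddCommGroup V] [NormedSpace ℝ V] (x v : V) :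
    HasDerivAt (fun t : ℝ => x + t • v) v 0 := by
  simpa using ((hasDerivAt_id (0 : ℝ)).smul_const v).const_add x

lemma pdx_congr {F G : E n → E n → ℝ} {U : Set (E n)} (hU : IsOpen U) (hx : x ∈ U)
    (hFG : ∀ a ∈ U, F a y = G a y) (i : Fin n) : pdx F i x y = pdx G i x y := by
  have hline := (hasDerivAt_line x (EuclideanSpace.single i (1 : ℝ))).continuousAt
  refine Filter.EventuallyEq.deriv_eq ?_
  filter_upwards [hline.preimage_mem_nhds (hU.mem_nhds (by simpa using hx))] with t ht
  exact hFG _ ht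

lemma pdy_congr {F G : E n → E n → ℝ} {V : Set (E n)} (hV : IsOpen V) (hy : y ∈ V)
    (hFG : ∀ b ∈ V, F x b = G x b) (i : Fin n) : pdy F i x y = pdy G i x y := by
  have hline := (hasDerivAt_line y (EuclideanSpace.single i (1 : ℝ))).continuousAt
  refine Filter.EventuallyEq.deriv_eq ?_
  filter_upwards [hline.preimage_mem_nhds (hV.mem_nhds (by simpa using hy))] with t ht
  exact hFG _ ht

end partialDerivatives

namespace Berwald

def root (u v w : ℝ) : ℝ := Real.sqrt ((1 - u) * v + w ^ 2)

def f (u v w : ℝ) : ℝ := (root u v w + w) ^ 2 / ((1 - u) ^ 2 * root u v w)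

def fU (u v w : ℝ) : ℝ :=
  (root u v w + w) ^ 3 * (3 * root u v w - w) / (2 * (1 - u) ^ 3 * root u v w ^ 3)
def fV (u v w : ℝ) : ℝ := v / (2 * root u v w ^ 3)
def fW (u v w : ℝ) : ℝ :=
  (root u v w + w) ^ 2 * (2 * root u v w - w) / ((1 - u) ^ 2 * root u v w ^ 3)

def fVU (u v w : ℝ) : ℝ := 3 * v ^ 2 / (4 * root u v w ^ 5)
def fVV (u v w : ℝ) : ℝ := (3 * w ^ 2 - root u v w ^ 2) / (4 * root u v w ^ 5)
def fVW (u v w : ℝ) : ℝ := -(3 * v * w) / (2 * root u v w ^ 5)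
def fWU (u v w : ℝ) : ℝ :=
  (root u v w + w) ^ 3 * (8 * root u v w ^ 2 - 9 * root u v w * w + 3 * w ^ 2) /
    (2 * (1 - u) ^ 3 * root u v w ^ 5)
def fWW (u v w : ℝ) : ℝ :=
  3 * (root u v w + w) ^ 2 * (root u v w - w) ^ 2 / ((1 - u) ^ 2 * root u v w ^ 5)

def p (u v w : ℝ) : ℝ := (root u v w + w) / (1 - u)
def pU (u v w : ℝ) : ℝ := (root u v w + w) ^ 2 / (2 * root u v w * (1 - u) ^ 2)
def pV (u v w : ℝ) : ℝ := 1 / (2 * root u v w)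
def pW (u v w : ℝ) : ℝ := (root u v w + w) / (root u v w * (1 - u))

section algebra

variable {u v w : ℝ}

lemma root_pos (hD : 0 < (1 - u) * v + w ^ 2) : 0 < root u v w := Real.sqrt_pos.mpr hD

lemma eq_div_of_root (hu : u ≠ 1) (hD : 0 < (1 - u) * v + w ^ 2) :
    v = (root u v w ^ 2 - w ^ 2) / (1 - u) := by
  rw [root, Real.sq_sqrt hD.le, eq_div_iff (sub_ne_zero.mpr hu.symm)]
  ring

lemma rapcsak_fV (hD : 0 < (1 - u) * v + w ^ 2) : 2 * w * fVU u v w + v * fVW u v w = 0 := by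
  have := root_pos hD
  simp only [fVU, fVW]
  field_simp
  ring

lemma rapcsak_fW (hu : u ≠ 1) (hD : 0 < (1 - u) * v + w ^ 2) :
    2 * w * fWU u v w + v * fWW u v w = 2 * fU u v w := by
  have hA := root_pos hD
  have hv := eq_div_of_root hu hD
  have hu' : 1 - u ≠ 0 := sub_ne_zero.mpr hu.symm
  simp only [fWU, fWW, fU]
  generalize root u v w = A at *
  subst hv
  field_simp
  ring

lemma contract_fU_fW (hu : u ≠ 1) (hD : 0 < (1 - u) * v + w ^ 2) :
    2 * w * fU u v w + v * fW u v w = 2 * f u v w * p u v w := by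
  have hA := root_pos hD
  have hv := eq_div_of_root hu hD
  have hu' : 1 - u ≠ 0 := sub_ne_zero.mpr hu.symm
  simp only [fU, fW, f, p]
  generalize root u v w = A at *
  subst hv
  field_simp
  ring

lemma shen_pU (hu : u ≠ 1) (hD : 0 < (1 - u) * v + w ^ 2) : 2 * pU u v w = p u v w * pW u v w := by
  have := root_pos hD
  have hu' : 1 - u ≠ 0 := sub_ne_zero.mpr hu.symm
  simp only [pU, p, pW]
  field_simp

lemma shen_pW (hD : 0 < (1 - u) * v + w ^ 2) : pW u v w = 2 * p u v w * pV u v w := by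
  have := root_pos hD
  simp only [pW, p, pV]
  field_simp

lemma f_pos (hu : u < 1) (hv : 0 < v) : 0 < f u v w := by
  have hD : 0 < (1 - u) * v + w ^ 2 := by nlinarith
  have hw : |w| < root u v w := by
    rw [root, ← Real.sqrt_sq_eq_abs]
    exact Real.sqrt_lt_sqrt (sq_nonneg w) (by nlinarith)
  have := root_pos hD
  have : 0 < root u v w + w := by linarith [neg_abs_le w]
  have : 0 < 1 - u := by linarith
  unfold f
  positivity

end algebra

/-- `gU, gV, gW` are the partial derivatives of `g` on the region `u ≠ 1`, `(1 - u) v + w² > 0`,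
in the form of the chain rule along differentiable curves. -/
def HasPartials (g gU gV gW : ℝ → ℝ → ℝ → ℝ) : Prop :=
  ∀ ⦃cu cv cw : ℝ → ℝ⦄ ⦃du dv dw t : ℝ⦄, HasDerivAt cu du t → HasDerivAt cv dv t →
    HasDerivAt cw dw t → cu t ≠ 1 → 0 < (1 - cu t) * cv t + cw t ^ 2 →
    HasDerivAt (fun s => g (cu s) (cv s) (cw s))
      (gU (cu t) (cv t) (cw t) * du + gV (cu t) (cv t) (cw t) * dv + gW (cu t) (cv t) (cw t) * dw) t

section calculus

variable {cu cv cw : ℝ → ℝ} {du dv dw t : ℝ}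

lemma hasDerivAt_root (hcu : HasDerivAt cu du t) (hcv : HasDerivAt cv dv t)
    (hcw : HasDerivAt cw dw t) (hD : 0 < (1 - cu t) * cv t + cw t ^ 2) :
    HasDerivAt (fun s => root (cu s) (cv s) (cw s))
      ((-du * cv t + (1 - cu t) * dv + 2 * cw t * dw) / (2 * root (cu t) (cv t) (cw t))) t := by
  refine ((((hcu.const_sub 1).fun_mul hcv).fun_add (hcw.fun_pow 2)).sqrt hD.ne').congr_deriv ?_
  norm_num [root]

lemma hasPartials_f : HasPartials f fU fV fW := by
  intro cu cv cw du dv dw t hcu hcv hcw hu hD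
  have hA := hasDerivAt_root hcu hcv hcw hD
  have hA0 := root_pos hD
  have hu' : 1 - cu t ≠ 0 := sub_ne_zero.mpr (Ne.symm hu)
  refine (((hA.fun_add hcw).fun_pow 2).fun_div (((hcu.const_sub 1).fun_pow 2).fun_mul hA)
    (mul_ne_zero (pow_ne_zero 2 hu') hA0.ne')).congr_deriv ?_
  have hv := eq_div_of_root hu hD
  simp only [fU, fV, fW]
  generalize root (cu t) (cv t) (cw t) = A at hv hA0 ⊢
  rw [hv]
  field_simp
  ring

lemma hasPartials_fV : HasPartials fV fVU fVV fVW := by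
  intro cu cv cw du dv dw t hcu hcv hcw hu hD
  have hA := hasDerivAt_root hcu hcv hcw hD
  have hA0 := root_pos hD
  have hu' : 1 - cu t ≠ 0 := sub_ne_zero.mpr (Ne.symm hu)
  refine (hcv.fun_div ((hA.fun_pow 3).const_mul 2) (by positivity)).congr_deriv ?_
  have hv := eq_div_of_root hu hD
  simp only [fVU, fVV, fVW]
  generalize root (cu t) (cv t) (cw t) = A at hv hA0 ⊢
  rw [hv]
  field_simp
  ring

lemma hasPartials_fW : HasPartials fW fWU fVW fWW := by
  intro cu cv cw du dv dw t hcu hcv hcw hu hD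
  have hA := hasDerivAt_root hcu hcv hcw hD
  have hA0 := root_pos hD
  have hu' : 1 - cu t ≠ 0 := sub_ne_zero.mpr (Ne.symm hu)
  refine ((((hA.fun_add hcw).fun_pow 2).fun_mul ((hA.const_mul 2).fun_sub hcw)).fun_div
    (((hcu.const_sub 1).fun_pow 2).fun_mul (hA.fun_pow 3))
    (mul_ne_zero (pow_ne_zero 2 hu') (pow_ne_zero 3 hA0.ne'))).congr_deriv ?_
  have hv := eq_div_of_root hu hD
  simp only [fWU, fVW, fWW]
  generalize root (cu t) (cv t) (cw t) = A at hv hA0 ⊢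
  rw [hv]
  field_simp
  ring

lemma hasPartials_p : HasPartials p pU pV pW := by
  intro cu cv cw du dv dw t hcu hcv hcw hu hD
  have hA := hasDerivAt_root hcu hcv hcw hD
  have hA0 := root_pos hD
  have hu' : 1 - cu t ≠ 0 := sub_ne_zero.mpr (Ne.symm hu)
  refine ((hA.fun_add hcw).fun_div (hcu.const_sub 1) hu').congr_deriv ?_
  have hv := eq_div_of_root hu hD
  simp only [pU, pV, pW]
  generalize root (cu t) (cv t) (cw t) = A at hv hA0 ⊢
  rw [hv]
  field_simp
  ring

end calculus

section geometry

variable {n : ℕ} {x y : E n}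

lemma norm_sq_lt_one (hx : ‖x‖ < 1) : ‖x‖ ^ 2 < 1 := pow_lt_one₀ (norm_nonneg x) hx two_ne_zero

lemma disc_pos (hx : ‖x‖ < 1) (hy : y ≠ 0) : 0 < (1 - ‖x‖ ^ 2) * ‖y‖ ^ 2 + ⟪x, y⟫ ^ 2 := by
  have := norm_sq_lt_one hx
  have := norm_pos_iff.mpr hy
  positivity

variable {g gU gV gW : ℝ → ℝ → ℝ → ℝ}

lemma hasDerivAt_comp_line_left (hg : HasPartials g gU gV gW) (hx : ‖x‖ < 1) (hy : y ≠ 0)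
    (i : Fin n) :
    HasDerivAt (fun t : ℝ => g (‖x + t • EuclideanSpace.single i (1 : ℝ)‖ ^ 2) (‖y‖ ^ 2)
        ⟪x + t • EuclideanSpace.single i (1 : ℝ), y⟫)
      (2 * gU (‖x‖ ^ 2) (‖y‖ ^ 2) ⟪x, y⟫ * x i + gW (‖x‖ ^ 2) (‖y‖ ^ 2) ⟪x, y⟫ * y i) 0 := by
  have hline := hasDerivAt_line x (EuclideanSpace.single i (1 : ℝ))
  convert hg hline.norm_sq (hasDerivAt_const 0 (‖y‖ ^ 2)) (hline.inner ℝ (hasDerivAt_const 0 y))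
    (by simpa using (norm_sq_lt_one hx).ne) (by simpa using disc_pos hx hy) using 1
  simp [EuclideanSpace.inner_single_left, EuclideanSpace.inner_single_right]
  ring

lemma hasDerivAt_comp_line_right (hg : HasPartials g gU gV gW) (hx : ‖x‖ < 1) (hy : y ≠ 0)
    (i : Fin n) :
    HasDerivAt (fun t : ℝ => g (‖x‖ ^ 2) (‖y + t • EuclideanSpace.single i (1 : ℝ)‖ ^ 2)
        ⟪x, y + t • EuclideanSpace.single i (1 : ℝ)⟫)
      (2 * gV (‖x‖ ^ 2) (‖y‖ ^ 2) ⟪x, y⟫ * y i + gW (‖x‖ ^ 2) (‖y‖ ^ 2) ⟪x, y⟫ * x i) 0 := by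
  have hline := hasDerivAt_line y (EuclideanSpace.single i (1 : ℝ))
  convert hg (hasDerivAt_const 0 (‖x‖ ^ 2)) hline.norm_sq ((hasDerivAt_const 0 x).inner ℝ hline)
    (norm_sq_lt_one hx).ne (by simpa using disc_pos hx hy) using 1
  simp [EuclideanSpace.inner_single_right]
  ring

lemma pdx_comp (hg : HasPartials g gU gV gW) (hx : ‖x‖ < 1) (hy : y ≠ 0) (i : Fin n) :
    pdx (fun a b => g (‖a‖ ^ 2) (‖b‖ ^ 2) ⟪a, b⟫) i x y =
      2 * gU (‖x‖ ^ 2) (‖y‖ ^ 2) ⟪x, y⟫ * x i + gW (‖x‖ ^ 2) (‖y‖ ^ 2) ⟪x, y⟫ * y i :=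
  (hasDerivAt_comp_line_left hg hx hy i).deriv

lemma pdy_comp (hg : HasPartials g gU gV gW) (hx : ‖x‖ < 1) (hy : y ≠ 0) (i : Fin n) :
    pdy (fun a b => g (‖a‖ ^ 2) (‖b‖ ^ 2) ⟪a, b⟫) i x y =
      2 * gV (‖x‖ ^ 2) (‖y‖ ^ 2) ⟪x, y⟫ * y i + gW (‖x‖ ^ 2) (‖y‖ ^ 2) ⟪x, y⟫ * x i :=
  (hasDerivAt_comp_line_right hg hx hy i).deriv

end geometry

section metric

variable {n : ℕ} {x y : E n}

lemma eq_f : (Berwald : E n → E n → ℝ) = fun x y => f (‖x‖ ^ 2) (‖y‖ ^ 2) ⟪x, y⟫ := by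
  funext x y
  rw [Berwald, f, root, show ‖y‖ ^ 2 - (‖x‖ ^ 2 * ‖y‖ ^ 2 - ⟪x, y⟫ ^ 2) =
    (1 - ‖x‖ ^ 2) * ‖y‖ ^ 2 + ⟪x, y⟫ ^ 2 by ring]

lemma pdx_eq (hx : ‖x‖ < 1) (hy : y ≠ 0) (i : Fin n) :
    pdx Berwald i x y =
      2 * fU (‖x‖ ^ 2) (‖y‖ ^ 2) ⟪x, y⟫ * x i + fW (‖x‖ ^ 2) (‖y‖ ^ 2) ⟪x, y⟫ * y i := by
  rw [eq_f]
  exact pdx_comp hasPartials_f hx hy i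

lemma pdy_eq (hx : ‖x‖ < 1) (hy : y ≠ 0) (i : Fin n) :
    pdy Berwald i x y =
      2 * fV (‖x‖ ^ 2) (‖y‖ ^ 2) ⟪x, y⟫ * y i + fW (‖x‖ ^ 2) (‖y‖ ^ 2) ⟪x, y⟫ * x i := by
  rw [eq_f]
  exact pdy_comp hasPartials_f hx hy i

lemma pdx_pdy_eq (hx : ‖x‖ < 1) (hy : y ≠ 0) (k l : Fin n) :
    pdx (fun a b => pdy Berwald l a b) k x y =
      (4 * fVU (‖x‖ ^ 2) (‖y‖ ^ 2) ⟪x, y⟫ * y l + 2 * fWU (‖x‖ ^ 2) (‖y‖ ^ 2) ⟪x, y⟫ * x l) * x k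
        + (2 * fVW (‖x‖ ^ 2) (‖y‖ ^ 2) ⟪x, y⟫ * y l + fWW (‖x‖ ^ 2) (‖y‖ ^ 2) ⟪x, y⟫ * x l) * y k
        + fW (‖x‖ ^ 2) (‖y‖ ^ 2) ⟪x, y⟫ * EuclideanSpace.single k (1 : ℝ) l := by
  rw [pdx_congr (G := fun a b => 2 * fV (‖a‖ ^ 2) (‖b‖ ^ 2) ⟪a, b⟫ * b l
      + fW (‖a‖ ^ 2) (‖b‖ ^ 2) ⟪a, b⟫ * a l)
    Metric.isOpen_ball (mem_ball_zero_iff.mpr hx) fun a ha => pdy_eq (mem_ball_zero_iff.mp ha) hy l]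
  have hcoord : HasDerivAt (fun t : ℝ => (x + t • EuclideanSpace.single k (1 : ℝ)) l)
      (EuclideanSpace.single k (1 : ℝ) l) 0 := by
    simpa using
      ((hasDerivAt_id (0 : ℝ)).mul_const (EuclideanSpace.single k (1 : ℝ) l)).const_add (x l)
  have hfV := (hasDerivAt_comp_line_left hasPartials_fV hx hy k).const_mul 2
  have hfW := hasDerivAt_comp_line_left hasPartials_fW hx hy k
  have h := (hfV.mul_const (y l)).fun_add (hfW.fun_mul hcoord)
  rw [pdx, h.deriv, zero_smul, add_zero]
  ring

lemma projFactor_eq (hx : ‖x‖ < 1) (hy : y ≠ 0) :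
    projFactor Berwald x y = p (‖x‖ ^ 2) (‖y‖ ^ 2) ⟪x, y⟫ := by
  have hf := f_pos (w := ⟪x, y⟫) (norm_sq_lt_one hx) (pow_pos (norm_pos_iff.mpr hy) 2)
  rw [projFactor, eq_f, div_eq_iff (by positivity)]
  simp only [pdx_comp hasPartials_f hx hy, add_mul, mul_assoc, Finset.sum_add_distrib,
    ← Finset.mul_sum, sum_mul_eq_inner, real_inner_self_eq_norm_sq]
  linear_combination contract_fU_fW (norm_sq_lt_one hx).ne (disc_pos hx hy)

lemma pdx_projFactor_eq (hx : ‖x‖ < 1) (hy : y ≠ 0) (k : Fin n) :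
    pdx (projFactor Berwald) k x y =
      2 * pU (‖x‖ ^ 2) (‖y‖ ^ 2) ⟪x, y⟫ * x k + pW (‖x‖ ^ 2) (‖y‖ ^ 2) ⟪x, y⟫ * y k := by
  rw [← pdx_comp hasPartials_p hx hy k]
  exact pdx_congr Metric.isOpen_ball (mem_ball_zero_iff.mpr hx)
    (fun a ha => projFactor_eq (mem_ball_zero_iff.mp ha) hy) k

lemma pdy_projFactor_eq (hx : ‖x‖ < 1) (hy : y ≠ 0) (k : Fin n) :
    pdy (projFactor Berwald) k x y =
      2 * pV (‖x‖ ^ 2) (‖y‖ ^ 2) ⟪x, y⟫ * y k + pW (‖x‖ ^ 2) (‖y‖ ^ 2) ⟪x, y⟫ * x k := by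
  rw [← pdy_comp hasPartials_p hx hy k]
  exact pdy_congr isOpen_ne hy (fun b hb => projFactor_eq hx hb) k

theorem rapcsak (hx : ‖x‖ < 1) (hy : y ≠ 0) (l : Fin n) :
    ∑ k, pdx (fun a b => pdy Berwald l a b) k x y * y k = pdx Berwald l x y := by
  simp only [pdx_pdy_eq hx hy, pdx_eq hx hy, add_mul, mul_assoc, Finset.sum_add_distrib,
    ← Finset.mul_sum, sum_mul_eq_inner, real_inner_self_eq_norm_sq, sum_single_mul]
  linear_combination (2 * y l) * rapcsak_fV (disc_pos hx hy)
    + x l * rapcsak_fW (norm_sq_lt_one hx).ne (disc_pos hx hy)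

theorem pdx_projFactor_eq_mul_pdy (hx : ‖x‖ < 1) (hy : y ≠ 0) (k : Fin n) :
    pdx (projFactor Berwald) k x y = projFactor Berwald x y * pdy (projFactor Berwald) k x y := by
  rw [pdx_projFactor_eq hx hy, pdy_projFactor_eq hx hy, projFactor_eq hx hy]
  linear_combination x k * shen_pU (norm_sq_lt_one hx).ne (disc_pos hx hy)
    + y k * shen_pW (disc_pos hx hy)

end metric

end Berwald

/-- The Berwald metric is projective and has constant flag curvature `K = 0`. -/
theorem berwald_projective_constant_curvature {n : ℕ} :
    (∀ x : E n, ‖x‖ < 1 → ∀ y : E n, y ≠ 0 → ∀ l : Fin n,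
        (∑ k, pdx (fun a b => pdy Berwald l a b) k x y * y k) = pdx Berwald l x y) ∧
      (∀ x : E n, ‖x‖ < 1 → ∀ y : E n, y ≠ 0 → ∀ k : Fin n,
        pdx (projFactor Berwald) k x y =
          projFactor Berwald x y * pdy (projFactor Berwald) k x y) :=
  ⟨fun _ hx _ hy => Berwald.rapcsak hx hy, fun _ hx _ hy => Berwald.pdx_projFactor_eq_mul_pdy hx hy⟩
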